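/- For every n ≥ 1 and all a₁,…,aₙ ∈ A: Σ tr(L_{a₁⁽¹⁾a₂⁽¹⁾⋯aₙ⁽¹⁾}) · tr(L_{a₁⁽²⁾a₂⁽²⁾⋯aₙ⁽²⁾}) = dim_ℂ(A) · tr(L_{a₁a₂⋯aₙ}), where the sum is over the Sweedler expansions Δ(a_i) = Σ a_i⁽¹⁾ ⊗ a_i⁽²⁾ of each of the n arguments. (In components this is the relation |X|^{-1} C_{x₁⋯xₙ} C_{y₁⋯yₙ} Δ_{z₁}{}^{x₁y₁} ⋯ Δ_{zₙ}{}^{xₙyₙ} = C_{z₁⋯zₙ}.) -/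

import Mathlib

open TensorProduct Coalgebra

/-- The linear functional `a ↦ tr(L_a)` (trace of left multiplication by `a`). -/
noncomputable def traceLmul (A : Type*) [Ring A] [Algebra ℂ A] : A →ₗ[ℂ] ℂ :=
  (LinearMap.trace ℂ A) ∘ₗ (LinearMap.mul ℂ A)

/-- The linear functional on `A ⊗ A` sending `x ⊗ y` to `tr(L_x) · tr(L_y)`. -/
noncomputable def traceLmulTensor (A : Type*) [Ring A] [Algebra ℂ A] :
    A ⊗[ℂ] A →ₗ[ℂ] ℂ :=
  LinearMap.mul' ℂ ℂ ∘ₗ TensorProduct.map (traceLmul A) (traceLmul A)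

/-!
The canonical map `u ⊗ v ↦ Δ(u)(1 ⊗ v)` of `A ⊗ A` intertwines `L_b ⊗ id` with left
multiplication by `Δ(b)`. It is invertible: `f ↦ (u ⊗ v ↦ u₁ ⊗ f(u₂) v)` is multiplicative
from the convolution algebra of `A` (by coassociativity), and `id` has convolution inverse `S`.
Hence `tr L_{Δ(b)} = tr (L_b ⊗ id) = dim A · tr L_b`. The left-hand side of the theorem is
`tr L_{Δ(b)}` for `b = a₁⋯aₙ`, since `Δ` is multiplicative and `tr L_{x ⊗ y} = tr L_x · tr L_y`.
-/

open WithConv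

section Convolution

variable {R A : Type*} [CommSemiring R] [Semiring A] [Algebra R A] [Coalgebra R A]

/-- `galoisEnd f (u ⊗ v) = ∑ u₁ ⊗ f(u₂) v`; for `f = id` this is the canonical Hopf–Galois map
`u ⊗ v ↦ Δ(u)(1 ⊗ v)`. -/
noncomputable def galoisEnd (f : A →ₗ[R] A) : Module.End R (A ⊗[R] A) :=
  LinearMap.lTensor A (LinearMap.mul' R A) ∘ₗ
    (_root_.TensorProduct.assoc R A A A).toLinearMap ∘ₗ
    LinearMap.rTensor A (LinearMap.lTensor A f ∘ₗ comul)

lemma galoisEnd_tmul (f : A →ₗ[R] A) (u v : A) :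
    galoisEnd f (u ⊗ₜ v) = LinearMap.lTensor A (LinearMap.mulRight R v ∘ₗ f) (comul u) := by
  simp only [galoisEnd, LinearMap.comp_apply, LinearMap.rTensor_tmul, LinearEquiv.coe_coe]
  induction comul (R := R) u using TensorProduct.induction_on with
  | zero => simp
  | tmul x y => simp
  | add x y hx hy => simp [add_tmul, hx, hy]

lemma galoisEnd_comp_lTensor (f h : A →ₗ[R] A) :
    galoisEnd f ∘ₗ LinearMap.lTensor A h =
      LinearMap.lTensor A (LinearMap.mul' R A ∘ₗ map f h) ∘ₗ
        (_root_.TensorProduct.assoc R A A A).toLinearMap ∘ₗ LinearMap.rTensor A comul := by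
  refine TensorProduct.ext' fun x y => ?_
  simp only [LinearMap.comp_apply, LinearMap.lTensor_tmul, galoisEnd_tmul,
    LinearMap.rTensor_tmul, LinearEquiv.coe_coe]
  induction comul (R := R) x using TensorProduct.induction_on with
  | zero => simp
  | tmul x z => simp
  | add x z hx hz => simp [add_tmul, hx, hz]

lemma mulRight_comp_convMul (f g : WithConv (A →ₗ[R] A)) (v : A) :
    LinearMap.mulRight R v ∘ₗ (f * g).ofConv =
      LinearMap.mul' R A ∘ₗ map f.ofConv (LinearMap.mulRight R v ∘ₗ g.ofConv) ∘ₗ comul := by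
  ext w
  simp [(ℛ R w).convMul_apply, ← (ℛ R w).eq, mul_assoc]

variable (R A) in
noncomputable def galoisEndHom : WithConv (A →ₗ[R] A) →* Module.End R (A ⊗[R] A) where
  toFun f := galoisEnd f.ofConv
  map_one' := by
    refine TensorProduct.ext' fun u v => ?_
    have : LinearMap.mulRight R v ∘ₗ (1 : WithConv (A →ₗ[R] A)).ofConv =
        LinearMap.toSpanSingleton R A v ∘ₗ counit := by
      ext w
      simp [Algebra.smul_def]
    simp [galoisEnd_tmul, this, LinearMap.lTensor_comp]
  map_mul' f g := by
    refine TensorProduct.ext' fun u v => ?_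
    rw [Module.End.mul_apply, galoisEnd_tmul, galoisEnd_tmul, ← LinearMap.comp_apply (galoisEnd _),
      galoisEnd_comp_lTensor, LinearMap.comp_apply, LinearMap.comp_apply, LinearEquiv.coe_coe,
      coassoc_apply, mulRight_comp_convMul, LinearMap.lTensor_comp_apply,
      LinearMap.lTensor_comp_apply, LinearMap.lTensor_comp_apply]

end Convolution

lemma lTensor_mulRight_apply {R A B : Type*} [CommSemiring R] [Semiring A] [Algebra R A]
    [Semiring B] [Algebra R B] (x : A ⊗[R] B) (v : B) :
    LinearMap.lTensor A (LinearMap.mulRight R v) x = x * (1 ⊗ₜ v) := by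
  induction x using TensorProduct.induction_on with
  | zero => simp
  | tmul x y => simp
  | add x y hx hy => simp [add_mul, hx, hy]

section Hopf

variable {R A : Type*} [CommSemiring R] [Semiring A] [HopfAlgebra R A]

variable (R A) in
noncomputable def galoisUnit : (Module.End R (A ⊗[R] A))ˣ :=
  Units.map (galoisEndHom R A)
    ⟨toConv LinearMap.id, toConv (HopfAlgebra.antipode R), LinearMap.id_mul_antipode,
      LinearMap.antipode_mul_id⟩

lemma mul_comul_eq_conj (b : A) :
    (LinearMap.mul R (A ⊗[R] A) (comul b) : Module.End R (A ⊗[R] A)) =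
      galoisUnit R A * (map (LinearMap.mul R A b) LinearMap.id : Module.End R (A ⊗[R] A)) *
        ↑(galoisUnit R A)⁻¹ := by
  rw [Units.eq_mul_inv_iff_mul_eq]
  refine TensorProduct.ext' fun u v => ?_
  simp [galoisUnit, galoisEndHom, galoisEnd_tmul, lTensor_mulRight_apply, mul_assoc]

end Hopf

lemma trace_mul_comul {R A : Type*} [CommRing R] [Ring A] [HopfAlgebra R A] [Module.Free R A]
    [Module.Finite R A] (b : A) :
    LinearMap.trace R (A ⊗[R] A) (LinearMap.mul R (A ⊗[R] A) (comul b)) =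
      Module.finrank R A * LinearMap.trace R A (LinearMap.mul R A b) := by
  rw [mul_comul_eq_conj, LinearMap.trace_conj, LinearMap.trace_tensorProduct', LinearMap.trace_id,
    mul_comm]

lemma traceLmulTensor_eq_trace_mul {A : Type*} [Ring A] [Algebra ℂ A] [Module.Finite ℂ A]
    (t : A ⊗[ℂ] A) :
    traceLmulTensor A t = LinearMap.trace ℂ (A ⊗[ℂ] A) (LinearMap.mul ℂ (A ⊗[ℂ] A) t) := by
  induction t using TensorProduct.induction_on with
  | zero => simp
  | tmul x y =>
    rw [show LinearMap.mul ℂ (A ⊗[ℂ] A) (x ⊗ₜ y) = map (LinearMap.mul ℂ A x) (LinearMap.mul ℂ A y)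
      from LinearMap.mulLeft_tmul x y, LinearMap.trace_tensorProduct']
    simp [traceLmulTensor, traceLmul]
  | add s t hs ht => simp [hs, ht]

lemma list_prod_ofFn_comul {R A : Type*} [CommSemiring R] [Semiring A] [Bialgebra R A] {n : ℕ}
    (a : Fin n → A) :
    (List.ofFn fun i => comul (R := R) (a i)).prod = comul (List.ofFn a).prod := by
  rw [← Bialgebra.comulAlgHom_apply, map_list_prod, List.map_ofFn]
  rfl

theorem trace_comul_prod_general
    (A : Type*) [Ring A] [HopfAlgebra ℂ A] [Module.Finite ℂ A] :
    ∀ (n : ℕ), 1 ≤ n → ∀ (a : Fin n → A),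
      traceLmulTensor A
          ((List.ofFn (fun i => (comul (R := ℂ) (a i) : A ⊗[ℂ] A))).prod)
        = (Module.finrank ℂ A : ℂ) * traceLmul A ((List.ofFn a).prod) := by
  intro n _ a
  rw [list_prod_ofFn_comul, traceLmulTensor_eq_trace_mul, trace_mul_comul, traceLmul,
    LinearMap.comp_apply]

/-- For every `n ≥ 1` and all `a₁, …, aₙ ∈ A`:
`Σ tr(L_{a₁⁽¹⁾⋯aₙ⁽¹⁾}) · tr(L_{a₁⁽²⁾⋯aₙ⁽²⁾}) = dim A · tr(L_{a₁⋯aₙ})`,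
the sum being over the Sweedler expansions of each argument; here the left-hand
side is the functional `x ⊗ y ↦ tr(L_x)·tr(L_y)` applied to the product
`Δ(a₁)Δ(a₂)⋯Δ(aₙ)` in `A ⊗ A`.  (In components this is
`|X|⁻¹ C_{x₁⋯xₙ} C_{y₁⋯yₙ} Δ_{z₁}{}^{x₁y₁} ⋯ Δ_{zₙ}{}^{xₙyₙ} = C_{z₁⋯zₙ}`.) -/
theorem trace_comul_prod
    (A : Type*) [Ring A] [HopfAlgebra ℂ A] [Module.Finite ℂ A]
    (hinv : ∀ a : A, HopfAlgebra.antipode (R := ℂ) (HopfAlgebra.antipode (R := ℂ) a) = a) :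
    ∀ (n : ℕ), 1 ≤ n → ∀ (a : Fin n → A),
      traceLmulTensor A
          ((List.ofFn (fun i => (comul (R := ℂ) (a i) : A ⊗[ℂ] A))).prod)
        = (Module.finrank ℂ A : ℂ) * traceLmul A ((List.ofFn a).prod) :=
  trace_comul_prod_general A
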